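/- There exists a real-time quantum queue automaton M over input alphabet Σ = {a, b, 0, 1, c} with states Q = {q₀, q₁, q₂, q₃, q₄, q_acc1, q_acc2, q_r} and queue alphabet {A, B}, whose initial transition on the left end-marker # splits the computation into three paths each with amplitude 1/√3 — one path entering the rejecting state q_r immediately, one path (through q₁, q₃) enqueueing A for each a and B for each b of the prefix x and, after c, matching the suffix x against the queue, and one path (through q₂, q₄) enqueueing A for each 0 and B for each 1 of y and, after c, matching the second occurrence of y against the queue — such that M accepts every string of L_xy = { x y c y x : x ∈ {a, b}*, y ∈ {0, 1}* } with probability 2/3, and rejects every string not in L_xy with probability at least 2/3. -/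

import Mathlib

/-!
Real-time quantum queue automata (rtQQA) and real-time deterministic queue
automata (rtDQA).

An rtQQA reads its input `#w$` strictly left to right, one symbol per step.
Since the head position is determined by the time step, a configuration is a
pair (state, queue contents).  After each evolution step the machine is
measured: the squared amplitudes of configurations whose state is accepting
(resp. rejecting) are added to the acceptance (resp. rejection) probability,
and the non-halting part of the superposition continues.

STATEMENT 6: there is a concrete rtQQA with states
{q₀, q₁, q₂, q₃, q₄, q_acc1, q_acc2, q_r} and queue alphabet {A, B} whose
initial transition on the left end-marker # splits the computation into three
paths, each with amplitude 1/√3, accepting members of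
L_xy = { x y c y x | x ∈ {a,b}*, y ∈ {0,1}* } with probability 2/3 and
rejecting non-members with probability at least 2/3.
-/

namespace RTQ

/-- Queue operations: dequeue and enqueue. -/
inductive QOp : Type
  | deq | enq
  deriving DecidableEq

instance : Fintype QOp :=
  Fintype.ofList [QOp.deq, QOp.enq] (by intro x; cases x <;> simp)

/-- Tape symbols: the left end-marker `#`, the right end-marker `$`, or an
input symbol. -/
inductive TSym (A : Type) : Type
  | lend : TSym A
  | rend : TSym A
  | sym : A → TSym A

/-- A real-time quantum queue automaton with state set `Q`, queue alphabet `Γ`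
and input alphabet `A`.  The transition amplitude
`δ q σ z₁ zl q' z' op` depends on the current state `q`, the scanned tape
symbol `σ`, and the symbols `z₁`, `zl` at the front and rear of the queue
(`none` encodes the empty-queue symbol ⊥); the machine moves to state `q'`,
enqueues `z'` (or nothing, for `z' = none`, encoding τ) at the rear, performs
queue operation `op`, and the head always moves right. -/
structure RTQQA (Q Γ A : Type) : Type where
  init : Q
  acc : Finset Q
  rej : Finset Q
  δ : Q → TSym A → Option Γ → Option Γ → Q → Option Γ → QOp → ℂ

variable {Q Γ A : Type} [Fintype Q] [DecidableEq Q] [Fintype Γ]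

/-- Applying a queue operation: enqueue appends `z'` at the rear; dequeue
removes the front symbol (and appends `z'` at the rear, if `z' ≠ τ`). -/
def applyOp (l : List Γ) (z' : Option Γ) : QOp → List Γ
  | QOp.enq => l ++ z'.toList
  | QOp.deq => l.tail ++ z'.toList

/-- One evolution step applied to a single basis configuration. -/
noncomputable def stepConf (M : RTQQA Q Γ A) (σ : TSym A) (c : Q × List Γ) :
    (Q × List Γ) →₀ ℂ :=
  ∑ q' : Q, ∑ z' : Option Γ, ∑ op : QOp,
    M.δ c.1 σ c.2.head? c.2.getLast? q' z' op •
      Finsupp.single (q', applyOp c.2 z' op) 1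

/-- One evolution step applied to a superposition of configurations. -/
noncomputable def stepSup (M : RTQQA Q Γ A) (σ : TSym A)
    (v : (Q × List Γ) →₀ ℂ) : (Q × List Γ) →₀ ℂ :=
  v.sum fun c a => a • stepConf M σ c

/-- The probability mass of the accepting part of a superposition. -/
noncomputable def accMass (M : RTQQA Q Γ A) (v : (Q × List Γ) →₀ ℂ) : ℝ :=
  ∑ c ∈ v.support, if c.1 ∈ M.acc then Complex.normSq (v c) else 0

/-- The probability mass of the rejecting part of a superposition. -/
noncomputable def rejMass (M : RTQQA Q Γ A) (v : (Q × List Γ) →₀ ℂ) : ℝ :=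
  ∑ c ∈ v.support, if c.1 ∈ M.rej then Complex.normSq (v c) else 0

/-- Projection onto the non-halting subspace. -/
noncomputable def projNon (M : RTQQA Q Γ A) (v : (Q × List Γ) →₀ ℂ) :
    (Q × List Γ) →₀ ℂ :=
  v.filter fun c => c.1 ∉ M.acc ∧ c.1 ∉ M.rej

/-- Run of an rtQQA: repeatedly evolve, measure (accumulating the halting
probabilities) and continue with the non-halting part. -/
noncomputable def runAux (M : RTQQA Q Γ A) :
    List (TSym A) → ((Q × List Γ) →₀ ℂ) × ℝ × ℝ → ((Q × List Γ) →₀ ℂ) × ℝ × ℝ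
  | [], s => s
  | σ :: rest, s =>
      let v' := stepSup M σ s.1
      runAux M rest (projNon M v', s.2.1 + accMass M v', s.2.2 + rejMass M v')

/-- The probability that the rtQQA `M` accepts the input word `w` (the input
is written on the tape as `#w$`). -/
noncomputable def acceptProb (M : RTQQA Q Γ A) (w : List A) : ℝ :=
  (runAux M (TSym.lend :: (w.map TSym.sym ++ [TSym.rend]))
    (Finsupp.single (M.init, ([] : List Γ)) 1, 0, 0)).2.1

/-- The probability that the rtQQA `M` rejects the input word `w`. -/
noncomputable def rejectProb (M : RTQQA Q Γ A) (w : List A) : ℝ :=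
  (runAux M (TSym.lend :: (w.map TSym.sym ++ [TSym.rend]))
    (Finsupp.single (M.init, ([] : List Γ)) 1, 0, 0)).2.2

/-- Well-formedness (unitarity) condition for a real-time QQA: for each scanned
symbol and each pair of front/rear queue symbols, the columns of the transition
matrix are orthonormal. -/
def WellFormedRT (M : RTQQA Q Γ A) : Prop :=
  ∀ (σ : TSym A) (z₁ zl : Option Γ) (q₁ q₂ : Q),
    (∑ q' : Q, ∑ z' : Option Γ, ∑ op : QOp,
      (starRingEnd ℂ) (M.δ q₁ σ z₁ zl q' z' op) * M.δ q₂ σ z₁ zl q' z' op)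
      = if q₁ = q₂ then 1 else 0

end RTQ

/-- The five-letter input alphabet `{a, b, 0, 1, c}` (`z` stands for the digit
0 and `o` for the digit 1). -/
inductive AB01C : Type
  | a | b | z | o | c
  deriving DecidableEq

instance : Fintype AB01C :=
  Fintype.ofList [AB01C.a, AB01C.b, AB01C.z, AB01C.o, AB01C.c]
    (by intro x; cases x <;> simp)

/-- Encoding of a word `x ∈ {a, b}*` (`true ↦ a`, `false ↦ b`). -/
def encAB (x : List Bool) : List AB01C :=
  x.map fun t => if t then AB01C.a else AB01C.b

/-- Encoding of a word `y ∈ {0, 1}*` (`true ↦ 1`, `false ↦ 0`). -/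
def enc01 (y : List Bool) : List AB01C :=
  y.map fun t => if t then AB01C.o else AB01C.z

/-- The language `L_xy = { x y c y x : x ∈ {a, b}*, y ∈ {0, 1}* }`. -/
def Lxy : Set (List AB01C) :=
  { w | ∃ (x y : List Bool),
      w = encAB x ++ enc01 y ++ AB01C.c :: (enc01 y ++ encAB x) }

/-- The state set `{q₀, q₁, q₂, q₃, q₄, q_acc1, q_acc2, q_r}`. -/
inductive St2 : Type
  | q0 | q1 | q2 | q3 | q4 | qacc1 | qacc2 | qr
  deriving DecidableEq

instance : Fintype St2 :=
  Fintype.ofList [St2.q0, St2.q1, St2.q2, St2.q3, St2.q4, St2.qacc1, St2.qacc2,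
    St2.qr] (by intro x; cases x <;> simp)

/-- The queue alphabet `{A, B}`. -/
inductive QAB : Type
  | A | B
  deriving DecidableEq

instance : Fintype QAB :=
  Fintype.ofList [QAB.A, QAB.B] (by intro x; cases x <;> simp)

/-!
The initial split sends amplitude `1/√3` into each of `q_r`, `q₁` and `q₂`; from then on each
branch runs classically. The `q₂, q₄` branch accepts exactly the words `x y c y x'` with
`x, x' ∈ {a, b}*` and `y ∈ {0, 1}*`, and on such a word the `q₁, q₃` branch accepts iff
`x' = x`. Since every rejecting move enqueues a marker naming its branch, the two live branches
never reach the same configuration, so no amplitudes interfere: each accepting branch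
contributes `1/3` to the acceptance probability, and each rejecting one `1/3` on top of the
`1/3` rejected at once.
-/

namespace RTQ

variable {Q Γ A : Type}

namespace RTQQA

def IsHalting (M : RTQQA Q Γ A) (q : Q) : Prop := q ∈ M.acc ∨ q ∈ M.rej

instance [DecidableEq Q] (M : RTQQA Q Γ A) : DecidablePred M.IsHalting :=
  fun q => inferInstanceAs (Decidable (q ∈ M.acc ∨ q ∈ M.rej))

end RTQQA

open Finsupp

theorem sum_sum_sum_eq_sum_prod {α β γ M : Type*} [Fintype α] [Fintype β] [Fintype γ]
    [AddCommMonoid M] (f : α → β → γ → M) :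
    ∑ a, ∑ b, ∑ c, f a b c = ∑ t : α × β × γ, f t.1 t.2.1 t.2.2 := by
  simp only [Fintype.sum_prod_type]

theorem stepConf_eq_single [Fintype Q] [Fintype Γ] (M : RTQQA Q Γ A) (σ : TSym A)
    (c : Q × List Γ) (t : Q × Option Γ × QOp)
    (ht : M.δ c.1 σ c.2.head? c.2.getLast? t.1 t.2.1 t.2.2 = 1)
    (hne : ∀ q' z' op, (q', z', op) ≠ t → M.δ c.1 σ c.2.head? c.2.getLast? q' z' op = 0) :
    stepConf M σ c = single (t.1, applyOp c.2 t.2.1 t.2.2) 1 := by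
  rw [stepConf, sum_sum_sum_eq_sum_prod,
    Fintype.sum_eq_single t fun t' h => by simp [hne _ _ _ h], ht, one_smul]

theorem stepSup_single [Fintype Q] [Fintype Γ] (M : RTQQA Q Γ A) (σ : TSym A)
    (c : Q × List Γ) (α : ℂ) : stepSup M σ (single c α) = α • stepConf M σ c :=
  sum_single_index (zero_smul ℂ _)

theorem stepSup_sum_single [Fintype Q] [Fintype Γ] {ι : Type*} (M : RTQQA Q Γ A)
    (σ : TSym A) (s : Finset ι) (c : ι → Q × List Γ) (α : ι → ℂ) :
    stepSup M σ (∑ i ∈ s, single (c i) (α i)) =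
      ∑ i ∈ s, α i • stepConf M σ (c i) := by
  rw [stepSup, ← sum_finsetSum_index (h := fun c a => a • stepConf M σ c)
    (fun _ => zero_smul ℂ _) (fun _ _ _ => add_smul _ _ _)]
  exact Finset.sum_congr rfl fun i _ => stepSup_single M σ (c i) (α i)

theorem sum_support_sum_single [DecidableEq Q] {ι : Type*} (T : Finset Q) (s : Finset ι)
    (c : ι → Q × List Γ) (α : ι → ℂ) (hc : Set.InjOn c s) :
    ∑ x ∈ (∑ i ∈ s, single (c i) (α i)).support,
        (if x.1 ∈ T then Complex.normSq ((∑ i ∈ s, single (c i) (α i)) x) else 0)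
      = ∑ i ∈ s, if (c i).1 ∈ T then Complex.normSq (α i) else 0 := by
  classical
  have hsub : (∑ i ∈ s, single (c i) (α i)).support ⊆ s.image c :=
    support_finsetSum.trans <| Finset.biUnion_subset.2 fun i hi =>
      support_single_subset.trans (Finset.singleton_subset_iff.2 (Finset.mem_image_of_mem c hi))
  rw [Finset.sum_subset hsub fun x _ hx => by simp [notMem_support_iff.1 hx],
    Finset.sum_image hc]
  refine Finset.sum_congr rfl fun i hi => ?_
  rw [finsetSum_apply, Finset.sum_eq_single i (fun j hj hji => single_eq_of_ne
    (fun h => hji (hc hj hi h.symm))) (fun h => absurd hi h), single_eq_same]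

theorem accMass_sum_single [Fintype Q] [DecidableEq Q] [Fintype Γ] {ι : Type*}
    (M : RTQQA Q Γ A) (s : Finset ι) (c : ι → Q × List Γ) (α : ι → ℂ)
    (hc : Set.InjOn c s) :
    accMass M (∑ i ∈ s, single (c i) (α i))
      = ∑ i ∈ s, if (c i).1 ∈ M.acc then Complex.normSq (α i) else 0 :=
  sum_support_sum_single M.acc s c α hc

theorem rejMass_sum_single [Fintype Q] [DecidableEq Q] [Fintype Γ] {ι : Type*}
    (M : RTQQA Q Γ A) (s : Finset ι) (c : ι → Q × List Γ) (α : ι → ℂ)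
    (hc : Set.InjOn c s) :
    rejMass M (∑ i ∈ s, single (c i) (α i))
      = ∑ i ∈ s, if (c i).1 ∈ M.rej then Complex.normSq (α i) else 0 :=
  sum_support_sum_single M.rej s c α hc

theorem projNon_sum_single [DecidableEq Q] {ι : Type*} (M : RTQQA Q Γ A) (s : Finset ι)
    (c : ι → Q × List Γ) (α : ι → ℂ) :
    projNon M (∑ i ∈ s, single (c i) (α i))
      = ∑ i ∈ s with ¬M.IsHalting (c i).1, single (c i) (α i) := by
  rw [projNon, filter_sum, Finset.sum_filter]
  refine Finset.sum_congr rfl fun i _ => ?_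
  by_cases h : M.IsHalting (c i).1
  · rw [if_neg (not_not.2 h), filter_single_of_neg]
    simpa [RTQQA.IsHalting, or_iff_not_and_not] using h
  · rw [if_pos h, filter_single_of_pos]
    simpa [RTQQA.IsHalting, not_or] using h

theorem foldl_fst_of_isHalting (M : RTQQA Q Γ A) (next : Q × List Γ → TSym A → Q × List Γ)
    (habs : ∀ c σ, M.IsHalting c.1 → (next c σ).1 = c.1) (u : List (TSym A))
    (c : Q × List Γ) (hc : M.IsHalting c.1) : (u.foldl next c).1 = c.1 := by
  induction u generalizing c with
  | nil => rfl
  | cons σ u ih => rw [List.foldl_cons, ih _ (by rwa [habs c σ hc]), habs c σ hc]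

/- Branches that evolve classically by `next` and keep distinct labels never share a
configuration, so their amplitudes never interfere. -/
theorem runAux_sum_single [Fintype Q] [DecidableEq Q] [Fintype Γ] {ι κ : Type*}
    (M : RTQQA Q Γ A) (next : Q × List Γ → TSym A → Q × List Γ)
    (label : Q × List Γ → κ) (D : Set (Q × List Γ))
    (hstep : ∀ c ∈ D, ¬M.IsHalting c.1 → ∀ σ, stepConf M σ c = single (next c σ) 1 ∧
      next c σ ∈ D ∧ label (next c σ) = label c)
    (habs : ∀ c σ, M.IsHalting c.1 → (next c σ).1 = c.1)
    (u : List (TSym A)) (s : Finset ι) (c : ι → Q × List Γ) (α : ι → ℂ)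
    (hc : ∀ i ∈ s, c i ∈ D ∧ ¬M.IsHalting (c i).1) (hlabel : Set.InjOn (label ∘ c) s)
    (acc rej : ℝ) :
    (runAux M u (∑ i ∈ s, single (c i) (α i), acc, rej)).2 =
      (acc + ∑ i ∈ s, if (u.foldl next (c i)).1 ∈ M.acc then Complex.normSq (α i) else 0,
        rej + ∑ i ∈ s,
          if (u.foldl next (c i)).1 ∈ M.rej then Complex.normSq (α i) else 0) := by
  induction u generalizing s c acc rej with
  | nil =>
    have hzero : ∀ T : Finset Q, (∀ q ∈ T, M.IsHalting q) →
        ∑ i ∈ s, (if (([] : List (TSym A)).foldl next (c i)).1 ∈ T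
          then Complex.normSq (α i) else 0) = 0 :=
      fun T hT => Finset.sum_eq_zero fun i hi => if_neg fun h => (hc i hi).2 (hT _ h)
    rw [runAux, hzero M.acc (fun _ => Or.inl), hzero M.rej (fun _ => Or.inr), add_zero,
      add_zero]
  | cons σ u ih =>
    have hd : ∀ i ∈ s, stepConf M σ (c i) = single (next (c i) σ) 1 ∧
        next (c i) σ ∈ D ∧ label (next (c i) σ) = label (c i) :=
      fun i hi => hstep (c i) (hc i hi).1 (hc i hi).2 σ
    have hlabel' : Set.InjOn (fun i => label (next (c i) σ)) s := fun i hi j hj h =>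
      hlabel hi hj <| by simpa [(hd i hi).2.2, (hd j hj).2.2] using h
    have hinj : Set.InjOn (fun i => next (c i) σ) s :=
      fun i hi j hj h => hlabel' hi hj (congrArg label h)
    have hv : stepSup M σ (∑ i ∈ s, single (c i) (α i)) =
        ∑ i ∈ s, single (next (c i) σ) (α i) := by
      rw [stepSup_sum_single]
      exact Finset.sum_congr rfl fun i hi => by
        rw [(hd i hi).1, smul_single, smul_eq_mul, mul_one]
    -- a branch that halts now keeps its halting state, so it is counted now or never
    have hsplit : ∀ T : Finset Q, (∀ q ∈ T, M.IsHalting q) →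
        ∑ i ∈ s, (if ((σ :: u).foldl next (c i)).1 ∈ T then Complex.normSq (α i) else 0) =
          ∑ i ∈ s, (if (next (c i) σ).1 ∈ T then Complex.normSq (α i) else 0) +
          ∑ i ∈ s with ¬M.IsHalting (next (c i) σ).1,
            (if (u.foldl next (next (c i) σ)).1 ∈ T then Complex.normSq (α i) else 0) := by
      intro T hT
      rw [Finset.sum_filter, ← Finset.sum_add_distrib]
      refine Finset.sum_congr rfl fun i _ => ?_
      by_cases h : M.IsHalting (next (c i) σ).1
      · simp [h, foldl_fst_of_isHalting M next habs u _ h]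
      · simp [h, show (next (c i) σ).1 ∉ T from fun h' => h (hT _ h')]
        rfl
    rw [runAux, hv, projNon_sum_single, accMass_sum_single M s _ α hinj,
      rejMass_sum_single M s _ α hinj,
      ih (c := fun i => next (c i) σ)
        (hc := fun i hi => ⟨(hd i (Finset.mem_filter.1 hi).1).2.1, (Finset.mem_filter.1 hi).2⟩)
        (hlabel := hlabel'.mono (Finset.coe_subset.2 (Finset.filter_subset _ _))),
      hsplit M.acc (fun _ => Or.inl), hsplit M.rej (fun _ => Or.inr), add_assoc, add_assoc]

end RTQ

namespace LxyQQA

open RTQ St2 QAB TSym QOp AB01C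

/- Rejecting moves of the `q₁, q₃` branch enqueue the marker `A`, those of the `q₂, q₄` branch
the marker `B`, so the two branches never reach the same rejecting configuration. The queue
operations make `q ↦ move q σ z` injective (unitarity), and on `#` every state dequeues, which
keeps these moves apart from the three targets of the initial split. -/
def move : St2 → TSym AB01C → Option QAB → St2 × Option QAB × QOp
  | q1, sym a, _ => (q1, some A, enq)
  | q1, sym b, _ => (q1, some B, enq)
  | q1, sym z, _ => (q1, none, enq)
  | q1, sym o, _ => (q1, none, enq)
  | q1, sym c, _ => (q3, none, enq)
  | q1, rend, _ => (qr, some A, enq)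
  | q1, lend, _ => (q1, none, deq)
  | q3, sym a, some A => (q3, none, deq)
  | q3, sym a, _ => (qr, some A, deq)
  | q3, sym b, some B => (q3, none, deq)
  | q3, sym b, _ => (qr, some A, deq)
  | q3, sym z, _ => (q3, none, enq)
  | q3, sym o, _ => (q3, none, enq)
  | q3, sym c, _ => (qr, some A, deq)
  | q3, rend, none => (qacc1, none, enq)
  | q3, rend, some _ => (qr, some A, deq)
  | q3, lend, _ => (q3, none, deq)
  | q2, sym a, none => (q2, none, enq)
  | q2, sym a, some _ => (qr, some B, enq)
  | q2, sym b, none => (q2, none, enq)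
  | q2, sym b, some _ => (qr, some B, enq)
  | q2, sym z, _ => (q2, some A, enq)
  | q2, sym o, _ => (q2, some B, enq)
  | q2, sym c, _ => (q4, none, enq)
  | q2, rend, _ => (qr, some B, enq)
  | q2, lend, _ => (q2, none, deq)
  | q4, sym z, some A => (q4, none, deq)
  | q4, sym z, _ => (qr, some B, deq)
  | q4, sym o, some B => (q4, none, deq)
  | q4, sym o, _ => (qr, some B, deq)
  | q4, sym a, none => (q4, none, enq)
  | q4, sym a, some _ => (qr, some B, deq)
  | q4, sym b, none => (q4, none, enq)
  | q4, sym b, some _ => (qr, some B, deq)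
  | q4, sym c, _ => (qr, some B, deq)
  | q4, rend, none => (qacc2, none, enq)
  | q4, rend, some _ => (qr, some B, deq)
  | q4, lend, _ => (q4, none, deq)
  | qr, lend, _ => (qr, none, deq)
  | qr, _, _ => (qr, none, enq)
  | q0, _, _ => (q0, none, deq)
  | qacc1, _, _ => (qacc1, none, deq)
  | qacc2, _, _ => (qacc2, none, deq)

def splitTargets : Finset (St2 × Option QAB × QOp) :=
  {(qr, none, enq), (q1, none, enq), (q2, none, enq)}

open Classical in
noncomputable def delta (q : St2) (σ : TSym AB01C) (z₁ zl : Option QAB) (q' : St2)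
    (z' : Option QAB) (op : QOp) : ℂ :=
  if q = q0 ∧ σ = lend ∧ z₁ = none ∧ zl = none then
    if (q', z', op) ∈ splitTargets then ((Real.sqrt 3 : ℝ) : ℂ)⁻¹ else 0
  else if (q', z', op) = move q σ z₁ then 1 else 0

noncomputable def machine : RTQQA St2 QAB AB01C where
  init := q0
  acc := {qacc1, qacc2}
  rej := {qr}
  δ := delta

theorem move_injective (σ : TSym AB01C) (z : Option QAB) :
    Function.Injective fun q => move q σ z := by
  cases σ with
  | lend => revert z; decide
  | rend => revert z; decide
  | sym s => revert s z; decide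

theorem move_lend_notMem_splitTargets (q : St2) (z : Option QAB) :
    move q lend z ∉ splitTargets := by
  revert q z; decide

theorem normSq_inv_sqrt_three : Complex.normSq ((Real.sqrt 3 : ℝ) : ℂ)⁻¹ = 1 / 3 := by
  rw [map_inv₀, Complex.normSq_ofReal, Real.mul_self_sqrt (by norm_num), one_div]

theorem delta_of_not_split {q : St2} {σ : TSym AB01C} {z₁ zl : Option QAB}
    (h : ¬(q = q0 ∧ σ = lend ∧ z₁ = none ∧ zl = none)) (t : St2 × Option QAB × QOp) :
    delta q σ z₁ zl t.1 t.2.1 t.2.2 = if t = move q σ z₁ then 1 else 0 := by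
  simp [delta, h]

theorem delta_split (t : St2 × Option QAB × QOp) :
    delta q0 lend none none t.1 t.2.1 t.2.2 =
      if t ∈ splitTargets then ((Real.sqrt 3 : ℝ) : ℂ)⁻¹ else 0 := by
  simp [delta]

theorem wellFormedRT_machine : WellFormedRT machine := by
  intro σ z₁ zl q₁ q₂
  change ∑ q', ∑ z', ∑ op, (starRingEnd ℂ) (delta q₁ σ z₁ zl q' z' op) *
    delta q₂ σ z₁ zl q' z' op = _
  rw [sum_sum_sum_eq_sum_prod]
  by_cases h₁ : q₁ = q0 ∧ σ = lend ∧ z₁ = none ∧ zl = none <;>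
    by_cases h₂ : q₂ = q0 ∧ σ = lend ∧ z₁ = none ∧ zl = none
  · obtain ⟨rfl, rfl, rfl, rfl⟩ := h₁
    obtain ⟨rfl, -⟩ := h₂
    simp only [delta_split, apply_ite (starRingEnd ℂ), ite_mul, mul_ite, map_zero, zero_mul,
      mul_zero, ← Complex.normSq_eq_conj_mul_self, normSq_inv_sqrt_three,
      Finset.sum_ite_mem, Finset.univ_inter, Finset.sum_const]
    simp [splitTargets]
  · obtain ⟨rfl, rfl, rfl, rfl⟩ := h₁
    have hq₂ : q₂ ≠ q0 := fun h => h₂ ⟨h, rfl, rfl, rfl⟩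
    simp [delta_split, delta_of_not_split h₂, Ne.symm hq₂, move_lend_notMem_splitTargets]
  · obtain ⟨rfl, rfl, rfl, rfl⟩ := h₂
    have hq₁ : q₁ ≠ q0 := fun h => h₁ ⟨h, rfl, rfl, rfl⟩
    simp [delta_split, delta_of_not_split h₁, hq₁, move_lend_notMem_splitTargets]
  · simp [delta_of_not_split h₁, delta_of_not_split h₂, (move_injective σ z₁).eq_iff,
      eq_comm]

def detStep (c : St2 × List QAB) (σ : TSym AB01C) : St2 × List QAB :=
  let t := move c.1 σ c.2.head?
  (t.1, applyOp c.2 t.2.1 t.2.2)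

def readWord (c : St2 × List QAB) (w : List AB01C) : St2 × List QAB :=
  (w.map sym).foldl detStep c

def finalState (c : St2 × List QAB) (w : List AB01C) : St2 :=
  (detStep (readWord c w) rend).1

@[simp] theorem readWord_nil (c : St2 × List QAB) : readWord c [] = c := rfl

@[simp] theorem readWord_cons (c : St2 × List QAB) (s : AB01C) (w : List AB01C) :
    readWord c (s :: w) = readWord (detStep c (sym s)) w := rfl

theorem readWord_append (c : St2 × List QAB) (u v : List AB01C) :
    readWord c (u ++ v) = readWord (readWord c u) v := by
  simp [readWord]

theorem finalState_cons (c : St2 × List QAB) (s : AB01C) (w : List AB01C) :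
    finalState c (s :: w) = finalState (detStep c (sym s)) w := rfl

theorem finalState_append (c : St2 × List QAB) (u v : List AB01C) :
    finalState c (u ++ v) = finalState (readWord c u) v := by
  rw [finalState, readWord_append, finalState]

theorem readWord_eq_self {c : St2 × List QAB} {w : List AB01C}
    (h : ∀ s ∈ w, detStep c (sym s) = c) : readWord c w = c := by
  induction w with
  | nil => rfl
  | cons s w ih =>
    rw [readWord_cons, h s List.mem_cons_self, ih fun s' hs' => h s' (List.mem_cons_of_mem _ hs')]

theorem finalState_qr (l : List QAB) (w : List AB01C) : finalState (qr, l) w = qr := by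
  rw [finalState, readWord_eq_self fun s _ => by cases s <;> simp [detStep, move, applyOp]]
  rfl

def queueAB (x : List Bool) : List QAB := x.map fun t => if t then A else B

def queue01 (y : List Bool) : List QAB := y.map fun t => if t then B else A

@[simp] theorem encAB_nil : encAB [] = [] := rfl
@[simp] theorem encAB_cons (t : Bool) (x : List Bool) :
    encAB (t :: x) = (if t then a else b) :: encAB x := rfl
@[simp] theorem enc01_nil : enc01 [] = [] := rfl
@[simp] theorem enc01_cons (t : Bool) (y : List Bool) :
    enc01 (t :: y) = (if t then o else z) :: enc01 y := rfl
@[simp] theorem queueAB_nil : queueAB [] = [] := rfl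
@[simp] theorem queueAB_cons (t : Bool) (x : List Bool) :
    queueAB (t :: x) = (if t then A else B) :: queueAB x := rfl
@[simp] theorem queue01_nil : queue01 [] = [] := rfl
@[simp] theorem queue01_cons (t : Bool) (y : List Bool) :
    queue01 (t :: y) = (if t then B else A) :: queue01 y := rfl

def lxyWord (x y x' : List Bool) : List AB01C := encAB x ++ enc01 y ++ c :: (enc01 y ++ encAB x')

theorem mem_Lxy_iff {w : List AB01C} : w ∈ Lxy ↔ ∃ x y, w = lxyWord x y x := Iff.rfl

theorem readWord_q1_encAB (l : List QAB) (x : List Bool) :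
    readWord (q1, l) (encAB x) = (q1, l ++ queueAB x) := by
  induction x generalizing l with
  | nil => simp [queueAB]
  | cons t x ih => cases t <;> simp [detStep, move, applyOp, ih]

theorem readWord_q2_enc01 (l : List QAB) (y : List Bool) :
    readWord (q2, l) (enc01 y) = (q2, l ++ queue01 y) := by
  induction y generalizing l with
  | nil => simp [queue01]
  | cons t y ih => cases t <;> simp [detStep, move, applyOp, ih]

theorem readWord_q4_enc01 (l : List QAB) (y : List Bool) :
    readWord (q4, queue01 y ++ l) (enc01 y) = (q4, l) := by
  induction y with
  | nil => simp [queue01]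
  | cons t y ih => cases t <;> simp [detStep, move, applyOp, ih]

theorem readWord_q1_enc01 (l : List QAB) (y : List Bool) : readWord (q1, l) (enc01 y) = (q1, l) :=
  readWord_eq_self fun s hs => by
    obtain ⟨t, -, rfl⟩ := List.mem_map.1 hs
    cases t <;> simp [detStep, move, applyOp]

theorem readWord_q3_enc01 (l : List QAB) (y : List Bool) : readWord (q3, l) (enc01 y) = (q3, l) :=
  readWord_eq_self fun s hs => by
    obtain ⟨t, -, rfl⟩ := List.mem_map.1 hs
    cases t <;> simp [detStep, move, applyOp]

theorem readWord_q2_encAB (x : List Bool) : readWord (q2, []) (encAB x) = (q2, []) :=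
  readWord_eq_self fun s hs => by
    obtain ⟨t, -, rfl⟩ := List.mem_map.1 hs
    cases t <;> simp [detStep, move, applyOp]

theorem readWord_q4_encAB (x : List Bool) : readWord (q4, []) (encAB x) = (q4, []) :=
  readWord_eq_self fun s hs => by
    obtain ⟨t, -, rfl⟩ := List.mem_map.1 hs
    cases t <;> simp [detStep, move, applyOp]

theorem finalState_q3_encAB (x x' : List Bool) :
    finalState (q3, queueAB x) (encAB x') = if x' = x then qacc1 else qr := by
  induction x' generalizing x with
  | nil => cases x <;> simp [finalState, detStep, move]
  | cons t' x' ih =>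
    cases x with
    | nil => cases t' <;> simp [finalState_cons, detStep, move, applyOp, finalState_qr]
    | cons t x =>
      cases t <;> cases t' <;>
        simp [finalState_cons, detStep, move, applyOp, finalState_qr, ih]

theorem finalState_q1_lxyWord (x y x' : List Bool) :
    finalState (q1, []) (lxyWord x y x') = if x' = x then qacc1 else qr := by
  rw [lxyWord, finalState_append, readWord_append, readWord_q1_encAB, readWord_q1_enc01,
    finalState_cons, show detStep (q1, [] ++ queueAB x) (sym c) = (q3, queueAB x) by
      simp [detStep, move, applyOp],
    finalState_append, readWord_q3_enc01, finalState_q3_encAB]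

theorem finalState_q2_lxyWord (x y x' : List Bool) :
    finalState (q2, []) (lxyWord x y x') = qacc2 := by
  rw [lxyWord, finalState_append, readWord_append, readWord_q2_encAB, readWord_q2_enc01,
    finalState_cons, show detStep (q2, [] ++ queue01 y) (sym c) = (q4, queue01 y ++ []) by
      simp [detStep, move, applyOp],
    finalState_append, readWord_q4_enc01, finalState, readWord_q4_encAB]
  rfl

theorem exists_of_finalState_q4 (v : List AB01C) (y : List Bool)
    (h : finalState (q4, queue01 y) v = qacc2) : ∃ x', v = enc01 y ++ encAB x' := by
  induction v generalizing y with
  | nil =>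
    cases y with
    | nil => exact ⟨[], rfl⟩
    | cons t y => cases t <;> simp [finalState, detStep, move] at h
  | cons s v ih =>
    rw [finalState_cons] at h
    cases y with
    | nil =>
      cases s <;> simp [detStep, move, applyOp, finalState_qr] at h
      all_goals obtain ⟨x', rfl⟩ := ih [] h
      exacts [⟨true :: x', rfl⟩, ⟨false :: x', rfl⟩]
    | cons t y =>
      cases s <;> cases t <;> simp [detStep, move, applyOp, finalState_qr] at h
      all_goals obtain ⟨x', rfl⟩ := ih y h
      all_goals exact ⟨x', rfl⟩

theorem exists_of_finalState_q2 (w : List AB01C) (y : List Bool)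
    (h : finalState (q2, queue01 y) w = qacc2) :
    ∃ x y' x', (y = [] ∨ x = []) ∧
      w = encAB x ++ enc01 y' ++ c :: (enc01 (y ++ y') ++ encAB x') := by
  induction w generalizing y with
  | nil => simp [finalState, detStep, move] at h
  | cons s w ih =>
    rw [finalState_cons] at h
    cases s
    case c =>
      obtain ⟨x', rfl⟩ :=
        exists_of_finalState_q4 w y (by simpa [detStep, move, applyOp] using h)
      exact ⟨[], [], x', Or.inr rfl, by simp⟩
    case a =>
      cases y with
      | nil =>
        obtain ⟨x, y', x', -, rfl⟩ := ih [] (by simpa [detStep, move, applyOp] using h)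
        exact ⟨true :: x, y', x', Or.inl rfl, by simp⟩
      | cons t y => simp [detStep, move, applyOp, finalState_qr] at h
    case b =>
      cases y with
      | nil =>
        obtain ⟨x, y', x', -, rfl⟩ := ih [] (by simpa [detStep, move, applyOp] using h)
        exact ⟨false :: x, y', x', Or.inl rfl, by simp⟩
      | cons t y => simp [detStep, move, applyOp, finalState_qr] at h
    case z =>
      obtain ⟨x, y', x', hx, rfl⟩ :=
        ih (y ++ [false]) (by simpa [detStep, move, applyOp, queue01] using h)
      obtain rfl : x = [] := hx.resolve_left (by simp)
      exact ⟨[], false :: y', x', Or.inr rfl, by simp⟩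
    case o =>
      obtain ⟨x, y', x', hx, rfl⟩ :=
        ih (y ++ [true]) (by simpa [detStep, move, applyOp, queue01] using h)
      obtain rfl : x = [] := hx.resolve_left (by simp)
      exact ⟨[], true :: y', x', Or.inr rfl, by simp⟩

theorem exists_lxyWord_of_finalState_q2 {w : List AB01C} (h : finalState (q2, []) w = qacc2) :
    ∃ x y x', w = lxyWord x y x' := by
  obtain ⟨x, y, x', -, rfl⟩ := exists_of_finalState_q2 w [] h
  exact ⟨x, y, x', rfl⟩

theorem finalState_q2_eq_qacc2_or_qr (w : List AB01C) :
    finalState (q2, []) w = qacc2 ∨ finalState (q2, []) w = qr := by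
  have hmove : ∀ q ∈ ({q2, q4, qacc2, qr} : Finset St2), ∀ s z,
      (move q (sym s) z).1 ∈ ({q2, q4, qacc2, qr} : Finset St2) := by decide
  have hread : ∀ (w : List AB01C) (c : St2 × List QAB),
      c.1 ∈ ({q2, q4, qacc2, qr} : Finset St2) →
        (readWord c w).1 ∈ ({q2, q4, qacc2, qr} : Finset St2) := by
    intro w
    induction w with
    | nil => exact fun c hc => hc
    | cons s w ih => exact fun c hc => ih _ (hmove _ hc s _)
  have hend : ∀ q ∈ ({q2, q4, qacc2, qr} : Finset St2), ∀ z,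
      (move q rend z).1 = qacc2 ∨ (move q rend z).1 = qr := by decide
  exact hend _ (hread w (q2, []) (by decide)) _

theorem isHalting_machine_iff (q : St2) :
    machine.IsHalting q ↔ q = qacc1 ∨ q = qacc2 ∨ q = qr := by
  simp [RTQQA.IsHalting, machine, or_assoc]

theorem move_fst_ne_q0 {q : St2} (hq : q ≠ q0) (σ : TSym AB01C) (zh : Option QAB) :
    (move q σ zh).1 ≠ q0 := by
  cases σ with
  | sym s => revert q s zh; decide
  | _ => revert q zh; decide

theorem move_fst_of_isHalting {q : St2} (hq : machine.IsHalting q) (σ : TSym AB01C)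
    (zh : Option QAB) : (move q σ zh).1 = q := by
  rw [isHalting_machine_iff] at hq
  rcases hq with rfl | rfl | rfl <;> cases σ <;> rfl

theorem stepConf_machine {c : St2 × List QAB} (hc : c.1 ≠ q0) (σ : TSym AB01C) :
    stepConf machine σ c = Finsupp.single (detStep c σ) 1 := by
  have hsplit : ¬(c.1 = q0 ∧ σ = lend ∧ c.2.head? = none ∧ c.2.getLast? = none) :=
    fun h => hc h.1
  exact stepConf_eq_single machine σ c _ ((delta_of_not_split hsplit _).trans (if_pos rfl))
    fun q' z' op h => (delta_of_not_split hsplit (q', z', op)).trans (if_neg h)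

theorem stepConf_machine_init :
    stepConf machine lend (q0, []) =
      ∑ q ∈ {qr, q1, q2}, Finsupp.single (q, []) ((Real.sqrt 3 : ℝ) : ℂ)⁻¹ := by
  rw [stepConf, sum_sum_sum_eq_sum_prod]
  simp only [machine, List.head?_nil, List.getLast?_nil, delta_split, ite_smul, zero_smul,
    Finset.sum_ite_mem, Finset.univ_inter]
  simp [splitTargets, applyOp, Finsupp.smul_single]

/- A rejecting configuration is attributed to its branch by the marker last enqueued
(see `move`). -/
def marker (c : St2 × List QAB) : Option QAB :=
  match c.1 with
  | q1 | q3 | qacc1 => some A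
  | q2 | q4 | qacc2 => some B
  | qr => c.2.getLast?
  | q0 => none

theorem marker_detStep {c : St2 × List QAB} (hc : c.1 ≠ q0) (hlive : ¬machine.IsHalting c.1)
    (σ : TSym AB01C) : marker (detStep c σ) = marker c := by
  obtain ⟨q, l⟩ := c
  rw [isHalting_machine_iff] at hlive
  cases q <;> simp only [ne_eq, not_true_eq_false, reduceCtorEq, false_or, or_false,
    not_false_eq_true] at hc hlive <;>
    rcases l with _ | ⟨_ | _, l⟩ <;> rcases σ with _ | _ | (_ | _ | _ | _ | _) <;>
    simp [detStep, move, marker, applyOp, List.getLast?_cons]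

theorem runAux_machine (w : List AB01C) :
    (runAux machine (lend :: (w.map sym ++ [rend])) (Finsupp.single (q0, []) 1, 0, 0)).2 =
      (∑ q ∈ {q1, q2}, if finalState (q, []) w ∈ machine.acc then 1 / 3 else 0,
       1 / 3 + ∑ q ∈ {q1, q2}, if finalState (q, []) w ∈ machine.rej then 1 / 3 else 0) := by
  have hinj : Set.InjOn (fun q : St2 => ((q, []) : St2 × List QAB))
      (({qr, q1, q2} : Finset St2) : Set St2) :=
    fun _ _ _ _ h => congrArg Prod.fst h
  have hfilter :
      ({qr, q1, q2} : Finset St2).filter (fun q => ¬machine.IsHalting q) = {q1, q2} := by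
    decide
  have hv : stepSup machine lend (Finsupp.single (q0, []) 1) =
      ∑ q ∈ {qr, q1, q2}, Finsupp.single (q, []) ((Real.sqrt 3 : ℝ) : ℂ)⁻¹ := by
    rw [stepSup_single, one_smul, stepConf_machine_init]
  rw [runAux]
  dsimp only
  rw [hv, projNon_sum_single, hfilter, accMass_sum_single machine _ _ _ hinj,
    rejMass_sum_single machine _ _ _ hinj,
    runAux_sum_single machine detStep marker {c | c.1 ≠ q0}
      (fun c hc hlive σ =>
        ⟨stepConf_machine hc σ, move_fst_ne_q0 hc σ _, marker_detStep hc hlive σ⟩)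
      (fun c σ hc => move_fst_of_isHalting hc σ _) _ _ _ _ (by decide) (by decide)]
  have hfinal : ∀ q : St2,
      ((w.map sym ++ [rend]).foldl detStep (q, [])).1 = finalState (q, []) w :=
    fun q => by rw [List.foldl_append]; rfl
  simp only [hfinal, normSq_inv_sqrt_three]
  simp [machine]

theorem acceptProb_machine (w : List AB01C) :
    acceptProb machine w =
      ∑ q ∈ {q1, q2}, if finalState (q, []) w ∈ machine.acc then 1 / 3 else 0 :=
  congrArg Prod.fst (runAux_machine w)

theorem rejectProb_machine (w : List AB01C) :
    rejectProb machine w =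
      1 / 3 + ∑ q ∈ {q1, q2}, if finalState (q, []) w ∈ machine.rej then 1 / 3 else 0 :=
  congrArg Prod.snd (runAux_machine w)

theorem acceptProb_machine_of_mem {w : List AB01C} (hw : w ∈ Lxy) :
    acceptProb machine w = 2 / 3 := by
  obtain ⟨x, y, rfl⟩ := mem_Lxy_iff.1 hw
  rw [acceptProb_machine, Finset.sum_pair (by decide), finalState_q1_lxyWord, if_pos rfl,
    finalState_q2_lxyWord, if_pos (by decide), if_pos (by decide)]
  norm_num

theorem rejectProb_machine_of_not_mem {w : List AB01C} (hw : w ∉ Lxy) :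
    2 / 3 ≤ rejectProb machine w := by
  rw [rejectProb_machine, Finset.sum_pair (by decide)]
  rcases finalState_q2_eq_qacc2_or_qr w with h₂ | h₂
  · obtain ⟨x, y, x', rfl⟩ := exists_lxyWord_of_finalState_q2 h₂
    have hx : x' ≠ x := fun h => hw (mem_Lxy_iff.2 ⟨x, y, by rw [h]⟩)
    rw [finalState_q1_lxyWord, if_neg hx, h₂, if_pos (by decide), if_neg (by decide)]
    norm_num
  · rw [h₂, if_pos (show qr ∈ machine.rej by decide)]
    split_ifs <;> norm_num

end LxyQQA

/-- There exists a real-time quantum queue automaton `M` over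
input alphabet `Σ = {a, b, 0, 1, c}` with states
`Q = {q₀, q₁, q₂, q₃, q₄, q_acc1, q_acc2, q_r}` and queue alphabet `{A, B}`,
whose initial transition on the left end-marker `#` splits the computation
into three paths each with amplitude `1/√3` — one path entering the rejecting
state `q_r` immediately, one path (through `q₁, q₃`) enqueueing `A` for each
`a` and `B` for each `b` of the prefix `x` and, after `c`, matching the suffix
`x` against the queue, and one path (through `q₂, q₄`) enqueueing `A` for each
`0` and `B` for each `1` of `y` and, after `c`, matching the second occurrence
of `y` against the queue — such that `M` accepts every string of `L_xy` with
probability 2/3, and rejects every string not in `L_xy` with probability at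
least 2/3. -/
theorem Lxy_concrete_rtQQA :
    ∃ M : RTQ.RTQQA St2 QAB AB01C,
      RTQ.WellFormedRT M ∧
      M.init = St2.q0 ∧
      M.acc = {St2.qacc1, St2.qacc2} ∧
      M.rej = {St2.qr} ∧
      -- the initial transition on the left end-marker # splits the computation
      -- into three paths, each with amplitude 1/√3:
      -- one path enters the rejecting state q_r immediately ...
      M.δ St2.q0 RTQ.TSym.lend none none St2.qr none RTQ.QOp.enq
        = ((Real.sqrt 3 : ℝ) : ℂ)⁻¹ ∧
      -- ... one path goes through q₁ (and later q₃) ...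
      M.δ St2.q0 RTQ.TSym.lend none none St2.q1 none RTQ.QOp.enq
        = ((Real.sqrt 3 : ℝ) : ℂ)⁻¹ ∧
      -- ... and one path goes through q₂ (and later q₄)
      M.δ St2.q0 RTQ.TSym.lend none none St2.q2 none RTQ.QOp.enq
        = ((Real.sqrt 3 : ℝ) : ℂ)⁻¹ ∧
      -- the first path enqueues A for each a and B for each b of the prefix x
      M.δ St2.q1 (RTQ.TSym.sym AB01C.a) none none St2.q1 (some QAB.A)
        RTQ.QOp.enq = 1 ∧
      M.δ St2.q1 (RTQ.TSym.sym AB01C.b) none none St2.q1 (some QAB.B)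
        RTQ.QOp.enq = 1 ∧
      (∀ z₁ zl : QAB,
        M.δ St2.q1 (RTQ.TSym.sym AB01C.a) (some z₁) (some zl) St2.q1
          (some QAB.A) RTQ.QOp.enq = 1) ∧
      (∀ z₁ zl : QAB,
        M.δ St2.q1 (RTQ.TSym.sym AB01C.b) (some z₁) (some zl) St2.q1
          (some QAB.B) RTQ.QOp.enq = 1) ∧
      -- after c (moving to q₃) it matches the suffix x against the queue
      (∀ z₁ zl : QAB,
        M.δ St2.q1 (RTQ.TSym.sym AB01C.c) (some z₁) (some zl) St2.q3 none
          RTQ.QOp.enq = 1) ∧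
      (∀ zl : QAB,
        M.δ St2.q3 (RTQ.TSym.sym AB01C.a) (some QAB.A) (some zl) St2.q3 none
          RTQ.QOp.deq = 1) ∧
      (∀ zl : QAB,
        M.δ St2.q3 (RTQ.TSym.sym AB01C.b) (some QAB.B) (some zl) St2.q3 none
          RTQ.QOp.deq = 1) ∧
      -- the other path enqueues A for each 0 and B for each 1 of y
      M.δ St2.q2 (RTQ.TSym.sym AB01C.z) none none St2.q2 (some QAB.A)
        RTQ.QOp.enq = 1 ∧
      M.δ St2.q2 (RTQ.TSym.sym AB01C.o) none none St2.q2 (some QAB.B)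
        RTQ.QOp.enq = 1 ∧
      (∀ z₁ zl : QAB,
        M.δ St2.q2 (RTQ.TSym.sym AB01C.z) (some z₁) (some zl) St2.q2
          (some QAB.A) RTQ.QOp.enq = 1) ∧
      (∀ z₁ zl : QAB,
        M.δ St2.q2 (RTQ.TSym.sym AB01C.o) (some z₁) (some zl) St2.q2
          (some QAB.B) RTQ.QOp.enq = 1) ∧
      -- after c (moving to q₄) it matches the second occurrence of y against
      -- the queue
      (∀ z₁ zl : QAB,
        M.δ St2.q2 (RTQ.TSym.sym AB01C.c) (some z₁) (some zl) St2.q4 none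
          RTQ.QOp.enq = 1) ∧
      (∀ zl : QAB,
        M.δ St2.q4 (RTQ.TSym.sym AB01C.z) (some QAB.A) (some zl) St2.q4 none
          RTQ.QOp.deq = 1) ∧
      (∀ zl : QAB,
        M.δ St2.q4 (RTQ.TSym.sym AB01C.o) (some QAB.B) (some zl) St2.q4 none
          RTQ.QOp.deq = 1) ∧
      (∀ w : List AB01C, w ∈ Lxy → RTQ.acceptProb M w = 2 / 3) ∧
      (∀ w : List AB01C, w ∉ Lxy → RTQ.rejectProb M w ≥ 2 / 3) := by
  refine ⟨LxyQQA.machine, LxyQQA.wellFormedRT_machine, rfl, rfl, rfl, ?_, ?_, ?_, ?_, ?_, ?_, ?_,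
    ?_, ?_, ?_, ?_, ?_, ?_, ?_, ?_, ?_, ?_, fun _ => LxyQQA.acceptProb_machine_of_mem,
    fun _ => LxyQQA.rejectProb_machine_of_not_mem⟩
  all_goals
    intros
    simp [LxyQQA.machine, LxyQQA.delta, LxyQQA.move, LxyQQA.splitTargets]
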